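/- Completeness of the path spaces: For every t ≥ 0, d_∞ is a metric on Λ̂^t = [t,∞) × 𝒟₀ and on Λ^t = [t,∞) × 𝒞₀ (in particular it is symmetric, vanishes exactly on the diagonal, and satisfies the triangle inequality), and both (Λ̂^t, d_∞) and (Λ^t, d_∞) are complete metric spaces. -/

import Mathlib

/-! Read `(s, x)` as the path `X(τ) = x(τ - s)` on `ℝ`, frozen at `x(0)` from time `s` on. The
shifted path `x_{l-s}` is this path seen from time `l`, so `d_∞((s,x),(l,y)) = |l - s| + sup_τ
|X(τ) - Y(τ)|`: a distance of times plus a uniform distance. Càdlàg paths vanishing at `-∞` are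
bounded, so the suprema are finite and the metric axioms follow. A `d_∞`-Cauchy sequence has
convergent times `s_k → s` and uniformly convergent frozen paths `X_k → X`. Uniform limits keep
right-continuity, left limits, continuity and the limit `0` at `-∞`, and `X` is frozen after `s`,
so `X` is the frozen path of the limit point `(s, X(· + s))`. -/

open Filter Topology MeasureTheory Matrix
open scoped RealInnerProductSpace

noncomputable section

namespace PathHJB

/-- The domain `(-∞,0]` of the paths. -/
abbrev PathDom : Type := Set.Iic (0 : ℝ)

abbrev Eucl (d : ℕ) := EuclideanSpace ℝ (Fin d)

/-- Paths on `(-∞,0]` with values in `ℝ^d`. -/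
abbrev Pth (d : ℕ) := PathDom → Eucl d

def zeroPt : PathDom := ⟨0, Set.self_mem_Iic⟩

/-- The sup norm `|x|_C`. -/
def normC {d : ℕ} (x : Pth d) : ℝ := ⨆ θ : PathDom, ‖x θ‖

/-- The shifted path `x_h`. -/
def shift {d : ℕ} (x : Pth d) (h : ℝ) : Pth d := fun θ =>
  if hθ : -h ≤ θ.1 then x zeroPt
  else x ⟨θ.1 + h, Set.mem_Iic.mpr (by push_neg at hθ; linarith)⟩

/-- The vertical perturbation `x + v · 1_{{0}}`. -/
def vpert {d : ℕ} (x : Pth d) (v : Eucl d) : Pth d := fun θ =>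
  if θ.1 = 0 then x θ + v else x θ

/-- Càdlàg: right-continuous with left limits. -/
def IsCadlag {d : ℕ} (x : Pth d) : Prop :=
  (∀ θ : PathDom, ContinuousWithinAt x {η : PathDom | θ.1 ≤ η.1} θ) ∧
  (∀ θ : PathDom, ∃ L : Eucl d, Tendsto x (nhdsWithin θ {η : PathDom | η.1 < θ.1}) (nhds L))

/-- `𝒟₀`: càdlàg paths vanishing at `-∞`. -/
def D0 (d : ℕ) : Set (Pth d) := {x | IsCadlag x ∧ Tendsto x atBot (nhds 0)}

/-- `𝒞₀`: continuous paths vanishing at `-∞`. -/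
def C0 (d : ℕ) : Set (Pth d) := {x | Continuous x ∧ Tendsto x atBot (nhds 0)}

/-- The metric `d_∞`. -/
def dInfty {d : ℕ} (p q : ℝ × Pth d) : ℝ :=
  if p.1 ≤ q.1 then |q.1 - p.1| + normC (shift p.2 (q.1 - p.1) - q.2)
  else |p.1 - q.1| + normC (shift q.2 (p.1 - q.1) - p.2)

/-- `Λ̂^t = [t,∞) × 𝒟₀`. -/
def LamHat (d : ℕ) (t : ℝ) : Set (ℝ × Pth d) := {p | t ≤ p.1 ∧ p.2 ∈ D0 d}

/-- `Λ^t = [t,∞) × 𝒞₀`. -/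
def Lam (d : ℕ) (t : ℝ) : Set (ℝ × Pth d) := {p | t ≤ p.1 ∧ p.2 ∈ C0 d}

def stdBasis (d : ℕ) (i : Fin d) : Eucl d := EuclideanSpace.single i 1

/-- Horizontal (Dupire) derivative. -/
def HasHorizDerivAt {d : ℕ} (f : ℝ × Pth d → ℝ) (p : ℝ × Pth d) (v : ℝ) : Prop :=
  Tendsto (fun h : ℝ => (f (p.1 + h, shift p.2 h) - f p) / h) (𝓝[>] (0:ℝ)) (𝓝 v)

/-- Vertical (Dupire) derivative in direction `e_i`. -/
def HasVertDerivAt {d : ℕ} (f : ℝ × Pth d → ℝ) (p : ℝ × Pth d) (i : Fin d) (v : ℝ) : Prop :=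
  Tendsto (fun h : ℝ => (f (p.1, vpert p.2 (h • stdBasis d i)) - f p) / h) (𝓝[≠] (0:ℝ)) (𝓝 v)

/-- Continuity on a set w.r.t. `d_∞`. -/
def DContinuousOn {d : ℕ} {E : Type*} [NormedAddCommGroup E]
    (f : ℝ × Pth d → E) (S : Set (ℝ × Pth d)) : Prop :=
  ∀ p ∈ S, ∀ ε > (0:ℝ), ∃ δ > (0:ℝ), ∀ q ∈ S, dInfty p q < δ → ‖f q - f p‖ < ε

/-- Uniform continuity on a set w.r.t. `d_∞`. -/
def DUnifContOn {d : ℕ} {E : Type*} [NormedAddCommGroup E]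
    (f : ℝ × Pth d → E) (S : Set (ℝ × Pth d)) : Prop :=
  ∀ ε > (0:ℝ), ∃ δ > (0:ℝ), ∀ p ∈ S, ∀ q ∈ S, dInfty p q < δ → ‖f q - f p‖ < ε

def BoundedOn {d : ℕ} {E : Type*} [NormedAddCommGroup E]
    (f : ℝ × Pth d → E) (S : Set (ℝ × Pth d)) : Prop :=
  ∃ M : ℝ, ∀ p ∈ S, ‖f p‖ ≤ M

def PolyGrowthOn {d : ℕ} {E : Type*} [NormedAddCommGroup E]
    (f : ℝ × Pth d → E) (S : Set (ℝ × Pth d)) : Prop :=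
  ∃ C : ℝ, ∃ k : ℕ, ∀ p ∈ S, ‖f p‖ ≤ C * (1 + |p.1| + normC p.2) ^ k

/-- `f ∈ C_p^{1,2}(Λ̂^t)`, with prescribed pathwise derivatives. -/
structure IsCp12Hat (d : ℕ) (t : ℝ) (f : ℝ × Pth d → ℝ) (ft : ℝ × Pth d → ℝ)
    (fx : ℝ × Pth d → Eucl d) (fxx : ℝ × Pth d → Matrix (Fin d) (Fin d) ℝ) : Prop where
  horiz : ∀ p ∈ LamHat d t, HasHorizDerivAt f p (ft p)
  vert : ∀ p ∈ LamHat d t, ∀ i, HasVertDerivAt f p i (fx p i)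
  vert2 : ∀ p ∈ LamHat d t, ∀ i j, HasVertDerivAt (fun q => fx q j) p i (fxx p i j)
  cont : DContinuousOn f (LamHat d t)
  cont_t : DContinuousOn ft (LamHat d t)
  cont_x : DContinuousOn fx (LamHat d t)
  cont_xx : ∀ i j, DContinuousOn (fun p => fxx p i j) (LamHat d t)
  growth : PolyGrowthOn f (LamHat d t)
  growth_t : PolyGrowthOn ft (LamHat d t)
  growth_x : PolyGrowthOn fx (LamHat d t)
  growth_xx : ∀ i j, PolyGrowthOn (fun p => fxx p i j) (LamHat d t)

/-- Hilbert–Schmidt norm of a matrix. -/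
def hsNorm {m n : ℕ} (A : Matrix (Fin m) (Fin n) ℝ) : ℝ :=
  Real.sqrt (∑ i, ∑ j, (A i j) ^ 2)

/-- The Hamiltonian `H`. -/
def Ham {d n : ℕ} {U : Type*} (b : Pth d → U → Eucl d)
    (σ' : Pth d → U → Matrix (Fin d) (Fin n) ℝ) (q : Pth d → U → ℝ)
    (x : Pth d) (p : Eucl d) (l : Matrix (Fin d) (Fin d) ℝ) : ℝ :=
  ⨅ u : U, ((inner ℝ p (b x u) : ℝ) + (1/2) * (l * (σ' x u * (σ' x u)ᵀ)).trace + q x u)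

/-- Hypothesis 4.2. -/
structure Hyp42 {d n : ℕ} {U : Type*} [PseudoMetricSpace U] (L : ℝ)
    (b : Pth d → U → Eucl d) (σ' : Pth d → U → Matrix (Fin d) (Fin n) ℝ)
    (q : Pth d → U → ℝ) : Prop where
  pos : 0 < L
  continuous : ∀ x ∈ C0 d, ∀ u : U, ∀ ε > (0:ℝ), ∃ δ > (0:ℝ), ∀ y ∈ C0 d, ∀ u' : U,
    normC (x - y) < δ → dist u u' < δ →
    ‖b x u - b y u'‖ < ε ∧ hsNorm (σ' x u - σ' y u') < ε ∧ |q x u - q y u'| < ε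
  bound_b : ∀ x ∈ C0 d, ∀ u : U, ‖b x u‖ ^ 2 ≤ L ^ 2 * (1 + normC x ^ 2)
  bound_σ : ∀ x ∈ C0 d, ∀ u : U, hsNorm (σ' x u) ^ 2 ≤ L ^ 2 * (1 + normC x ^ 2)
  bound_q : ∀ x ∈ C0 d, ∀ u : U, (q x u) ^ 2 ≤ L ^ 2 * (1 + normC x ^ 2)
  lip_b : ∀ x ∈ C0 d, ∀ y ∈ C0 d, ∀ u : U, ‖b x u - b y u‖ ≤ L * normC (x - y)
  lip_σ : ∀ x ∈ C0 d, ∀ y ∈ C0 d, ∀ u : U, hsNorm (σ' x u - σ' y u) ≤ L * normC (x - y)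
  lip_q : ∀ x ∈ C0 d, ∀ y ∈ C0 d, ∀ u : U, |q x u - q y u| ≤ L * normC (x - y)

/-- Viscosity subsolution of `-λ w + ∂_t w + H(x, ∂_x w, ∂_{xx} w) = 0`. -/
def IsViscSubsol {d n : ℕ} {U : Type*} (lam : ℝ) (b : Pth d → U → Eucl d)
    (σ' : Pth d → U → Matrix (Fin d) (Fin n) ℝ) (q : Pth d → U → ℝ)
    (w : Pth d → ℝ) : Prop :=
  ∀ s : ℝ, 0 ≤ s → ∀ x ∈ C0 d,
    ∀ (φ φt : ℝ × Pth d → ℝ) (φx : ℝ × Pth d → Eucl d)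
      (φxx : ℝ × Pth d → Matrix (Fin d) (Fin d) ℝ),
      IsCp12Hat d s φ φt φx φxx →
      w x - φ (s, x) = 0 →
      (∀ p ∈ Lam d s, w p.2 - φ p ≤ 0) →
      0 ≤ -lam * w x + φt (s, x) + Ham b σ' q x (φx (s, x)) (φxx (s, x))

/-- Viscosity supersolution. -/
def IsViscSupersol {d n : ℕ} {U : Type*} (lam : ℝ) (b : Pth d → U → Eucl d)
    (σ' : Pth d → U → Matrix (Fin d) (Fin n) ℝ) (q : Pth d → U → ℝ)
    (w : Pth d → ℝ) : Prop :=
  ∀ s : ℝ, 0 ≤ s → ∀ x ∈ C0 d,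
    ∀ (φ φt : ℝ × Pth d → ℝ) (φx : ℝ × Pth d → Eucl d)
      (φxx : ℝ × Pth d → Matrix (Fin d) (Fin d) ℝ),
      IsCp12Hat d s φ φt φx φxx →
      w x + φ (s, x) = 0 →
      (∀ p ∈ Lam d s, 0 ≤ w p.2 + φ p) →
      -lam * w x - φt (s, x) + Ham b σ' q x (-φx (s, x)) (-φxx (s, x)) ≤ 0


/-- The two-argument functional `S_m(t,x,s,y)`. -/
def SmP {d : ℕ} (m : ℕ) (p q : ℝ × Pth d) : ℝ :=
  if normC (shift p.2 (max (q.1 - p.1) 0) - shift q.2 (max (p.1 - q.1) 0)) = 0 then 0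
  else (normC (shift p.2 (max (q.1 - p.1) 0) - shift q.2 (max (p.1 - q.1) 0)) ^ (2*m)
        - ‖p.2 zeroPt - q.2 zeroPt‖ ^ (2*m)) ^ 3
       / normC (shift p.2 (max (q.1 - p.1) 0) - shift q.2 (max (p.1 - q.1) 0)) ^ (4*m)

/-- `Υ^{m,M}(t,x,s,y)`. -/
def UpsP {d : ℕ} (m : ℕ) (M : ℝ) (p q : ℝ × Pth d) : ℝ :=
  SmP m p q + M * ‖p.2 zeroPt - q.2 zeroPt‖ ^ (2*m)

/-- `Ῡ^{m,M}(t,x,s,y) = Υ^{m,M}(t,x,s,y) + |s-t|²`. -/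
def UpsBarP {d : ℕ} (m : ℕ) (M : ℝ) (p q : ℝ × Pth d) : ℝ :=
  UpsP m M p q + (q.1 - p.1) ^ 2

/-- The single-path functional `Υ^{m,M}(x)`. -/
def Ups0 {d : ℕ} (m : ℕ) (M : ℝ) (x : Pth d) : ℝ :=
  (if normC x = 0 then 0
   else (normC x ^ (2*m) - ‖x zeroPt‖ ^ (2*m)) ^ 3 / normC x ^ (4*m))
  + M * ‖x zeroPt‖ ^ (2*m)

/-- `w̃^{t̂}` before taking the upper semicontinuous envelope:
the sup of `w(t,ξ)` over `ξ ∈ 𝒞₀` with `ξ(0) = x₀`. -/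
def sliceSup {d : ℕ} (w : ℝ × Pth d → ℝ) (t : ℝ) (x0 : Eucl d) : ℝ :=
  sSup {r : ℝ | ∃ ξ ∈ C0 d, ξ zeroPt = x0 ∧ r = w (t, ξ)}

def tildeW {d : ℕ} (w : ℝ × Pth d → ℝ) (tHat : ℝ) : ℝ × Eucl d → ℝ := fun p =>
  if tHat ≤ p.1 then sliceSup w p.1 p.2
  else sliceSup w tHat p.2 - Real.sqrt (tHat - p.1)

/-- Upper semicontinuous envelope. -/
def uscEnv {d : ℕ} (g : ℝ × Eucl d → ℝ) : ℝ × Eucl d → ℝ := fun p =>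
  Filter.limsup g (nhds p)

/-- A local modulus of continuity. -/
structure LocalModulus (ρ : ℝ → ℝ → ℝ) : Prop where
  cont : Continuous fun p : ℝ × ℝ => ρ p.1 p.2
  nonneg : ∀ t r, 0 ≤ t → 0 ≤ r → 0 ≤ ρ t r
  zero : ∀ r, 0 ≤ r → ρ 0 r = 0
  subadd : ∀ t s r, 0 ≤ t → 0 ≤ s → 0 ≤ r → ρ (t + s) r ≤ ρ t r + ρ s r
  mono : ∀ t r r', 0 ≤ t → 0 ≤ r → r ≤ r' → ρ t r ≤ ρ t r'

/-- Upper semicontinuity on a set w.r.t. `d_∞`. -/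
def DUSCOn {d : ℕ} (w : ℝ × Pth d → ℝ) (S : Set (ℝ × Pth d)) : Prop :=
  ∀ p ∈ S, ∀ ε > (0:ℝ), ∃ δ > (0:ℝ), ∀ q ∈ S, dInfty p q < δ → w q < w p + ε

def BddAboveOn {d : ℕ} (w : ℝ × Pth d → ℝ) (S : Set (ℝ × Pth d)) : Prop :=
  ∃ M : ℝ, ∀ p ∈ S, w p ≤ M

/-- `limsup_{t+|x|_C → ∞} w(t,x)/(t+|x|_C) < 0` on `Λ`. -/
def NegLimsupAtInfty {d : ℕ} (w : ℝ × Pth d → ℝ) : Prop :=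
  ∃ c < (0:ℝ), ∃ R : ℝ, ∀ p ∈ Lam d 0, R ≤ p.1 + normC p.2 →
    w p ≤ c * (p.1 + normC p.2)

/-- `φ ∈ C^{1,2}([0,∞) × ℝ^d)` with prescribed derivatives. -/
structure IsC12Fin (d : ℕ) (φ φt : ℝ × Eucl d → ℝ) (φx : ℝ × Eucl d → Eucl d)
    (φxx : ℝ × Eucl d → Matrix (Fin d) (Fin d) ℝ) : Prop where
  ht : ∀ p : ℝ × Eucl d, HasDerivAt (fun s => φ (s, p.2)) (φt p) p.1
  hx : ∀ p : ℝ × Eucl d, HasGradientAt (fun y => φ (p.1, y)) (φx p) p.2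
  hxx : ∀ p : ℝ × Eucl d, ∀ i j,
    HasDerivAt (fun h : ℝ => φx (p.1, p.2 + h • stdBasis d j) i) (φxx p i j) 0
  cont : Continuous φ
  cont_t : Continuous φt
  cont_x : Continuous φx
  cont_xx : ∀ i j, Continuous fun p => φxx p i j

/-- The class `Φ(t̂, x̂₀, T)` of Definition 6.1. -/
def PhiClass (d : ℕ) (tHat : ℝ) (xHat0 : Eucl d) (T : ℝ) (f : ℝ × Eucl d → ℝ) : Prop :=
  ∃ r > (0:ℝ), ∀ L > (0:ℝ),
    ∀ (φ φt : ℝ × Eucl d → ℝ) (φx : ℝ × Eucl d → Eucl d)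
      (φxx : ℝ × Eucl d → Matrix (Fin d) (Fin d) ℝ),
      IsC12Fin d φ φt φx φxx →
      ∀ t : ℝ, ∀ x0 : Eucl d, 0 < t → t < T →
        (∀ s : ℝ, ∀ y : Eucl d, 0 ≤ s → s ≤ T → f (s, y) - φ (s, y) ≤ f (t, x0) - φ (t, x0)) →
        ∃ C > (0:ℝ),
          (|t - tHat| + ‖x0 - xHat0‖ < r →
           |f (t, x0)| + ‖φx (t, x0)‖ + hsNorm (φxx (t, x0)) ≤ L →
           C ≤ φt (t, x0))

/-- Operator norm of a square matrix, via the associated Euclidean linear map. -/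
def matOpNorm {ι : Type*} [Fintype ι] [DecidableEq ι] (A : Matrix ι ι ℝ) : ℝ :=
  ‖LinearMap.toContinuousLinearMap (Matrix.toEuclideanLin A)‖

/-- The second-derivative matrix of `φ : ℝ^d × ℝ^d → ℝ` at a point, as a
`(2d) × (2d)` matrix indexed by `Fin d ⊕ Fin d`. -/
def hess2 {d : ℕ} (φ : Eucl d × Eucl d → ℝ) (z : Eucl d × Eucl d) :
    Matrix (Fin d ⊕ Fin d) (Fin d ⊕ Fin d) ℝ := fun k l =>
  iteratedFDeriv ℝ 2 φ z
    ![Sum.elim (fun i => ((stdBasis d i, 0) : Eucl d × Eucl d))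
        (fun j => ((0, stdBasis d j) : Eucl d × Eucl d)) k,
      Sum.elim (fun i => ((stdBasis d i, 0) : Eucl d × Eucl d))
        (fun j => ((0, stdBasis d j) : Eucl d × Eucl d)) l]

/-- Hessian matrix of `φ : ℝ^d → ℝ`. -/
def hess1 {d : ℕ} (φ : Eucl d → ℝ) (z : Eucl d) : Matrix (Fin d) (Fin d) ℝ := fun i j =>
  iteratedFDeriv ℝ 2 φ z ![stdBasis d i, stdBasis d j]


/-- The path `x - a_{t-t̂}` appearing in `S_m(t,x,t̂,a)` (for `t ≥ t̂`). -/
def zRel {d : ℕ} (tHat : ℝ) (a : Pth d) (p : ℝ × Pth d) : Pth d :=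
  shift p.2 (max (tHat - p.1) 0) - shift a (max (p.1 - tHat) 0)

end PathHJB

open Bornology

section SupDist

variable {α E : Type*} [PseudoMetricSpace E]

-- In `ℝ`, `⨆` of an unbounded family is `0`: hence the boundedness hypotheses below.
def supDist (f g : α → E) : ℝ := ⨆ a, dist (f a) (g a)

lemma supDist_nonneg (f g : α → E) : 0 ≤ supDist f g :=
  Real.iSup_nonneg fun _ => dist_nonneg

lemma supDist_comm (f g : α → E) : supDist f g = supDist g f := by
  simp only [supDist, dist_comm]

lemma supDist_self (f : α → E) : supDist f f = 0 := by
  simp [supDist]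

lemma supDist_le {f g : α → E} {C : ℝ} (hC : 0 ≤ C) (h : ∀ a, dist (f a) (g a) ≤ C) :
    supDist f g ≤ C :=
  Real.iSup_le h hC

lemma dist_le_supDist {f g : α → E} (hf : IsBounded (Set.range f))
    (hg : IsBounded (Set.range g)) (a : α) : dist (f a) (g a) ≤ supDist f g := by
  obtain ⟨C, hC⟩ := Metric.isBounded_iff.1 (hf.union hg)
  refine le_ciSup (f := fun a => dist (f a) (g a)) ⟨C, Set.forall_mem_range.2 fun b => ?_⟩ a
  exact hC (Or.inl (Set.mem_range_self b)) (Or.inr (Set.mem_range_self b))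

lemma supDist_triangle {f g h : α → E} (hf : IsBounded (Set.range f))
    (hg : IsBounded (Set.range g)) (hh : IsBounded (Set.range h)) :
    supDist f h ≤ supDist f g + supDist g h :=
  supDist_le (add_nonneg (supDist_nonneg f g) (supDist_nonneg g h)) fun a =>
    (dist_triangle _ (g a) _).trans (add_le_add (dist_le_supDist hf hg a) (dist_le_supDist hg hh a))

lemma eq_of_supDist_eq_zero {E : Type*} [MetricSpace E] {f g : α → E}
    (hf : IsBounded (Set.range f)) (hg : IsBounded (Set.range g))
    (h : supDist f g = 0) : f = g :=
  funext fun a => dist_le_zero.1 (h ▸ dist_le_supDist hf hg a)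

lemma TendstoUniformly.tendsto_supDist {ι : Type*} {F : ι → α → E} {f : α → E} {p : Filter ι}
    (h : TendstoUniformly F f p) : Tendsto (fun n => supDist (F n) f) p (𝓝 0) := by
  refine Metric.tendsto_nhds.2 fun ε hε => ?_
  filter_upwards [Metric.tendstoUniformly_iff.1 h (ε / 2) (half_pos hε)] with n hn
  rw [Real.dist_0_eq_abs, abs_of_nonneg (supDist_nonneg _ _)]
  exact (supDist_le (half_pos hε).le fun a => by rw [dist_comm]; exact (hn a).le).trans_lt
    (half_lt_self hε)

end SupDist

section UniformLimits

variable {α ι E : Type*} {F : ι → α → E} {f : α → E} {p : Filter ι}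

lemma TendstoUniformly.continuousWithinAt_of_forall [TopologicalSpace α] [UniformSpace E] [p.NeBot]
    (h : TendstoUniformly F f p) {s : Set α} {x : α} (hx : x ∈ s)
    (hF : ∀ n, ContinuousWithinAt (F n) s x) : ContinuousWithinAt f s x :=
  continuousWithinAt_of_locally_uniform_approx_of_continuousWithinAt hx fun u hu =>
    let ⟨n, hn⟩ := (h u hu).exists
    ⟨Set.univ, Filter.univ_mem, F n, hF n, fun y _ => hn y⟩

lemma TendstoUniformly.exists_tendsto_of_forall [PseudoMetricSpace E] [CompleteSpace E]
    [p.NeBot] {l : Filter α} [l.NeBot] (h : TendstoUniformly F f p)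
    (hF : ∀ n, ∃ L, Tendsto (F n) l (𝓝 L)) : ∃ L, Tendsto f l (𝓝 L) := by
  refine cauchy_map_iff_exists_tendsto.1 (Metric.cauchy_iff.2 ⟨Filter.map_neBot, fun ε hε => ?_⟩)
  obtain ⟨n, hn⟩ := (Metric.tendstoUniformly_iff.1 h (ε / 4) (by positivity)).exists
  obtain ⟨L, hL⟩ := hF n
  refine ⟨f '' {y | dist (F n y) L < ε / 4},
    Filter.image_mem_map (Metric.tendsto_nhds.1 hL _ (by positivity)), ?_⟩
  rintro _ ⟨y, hy, rfl⟩ _ ⟨z, hz, rfl⟩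
  have hyL : dist (F n y) L < ε / 4 := hy
  have hLz : dist L (F n z) < ε / 4 := by rw [dist_comm]; exact hz
  have hzf : dist (F n z) (f z) < ε / 4 := by rw [dist_comm]; exact hn z
  calc dist (f y) (f z) ≤ dist (f y) (F n y) + dist (F n y) L + dist L (F n z)
        + dist (F n z) (f z) :=
        (dist_triangle _ (F n z) _).trans (add_le_add_left (dist_triangle4 _ _ _ _) _)
    _ < ε := by linarith [hn y]

end UniformLimits

lemma IsCompact.isBounded_image_of_locally {X E : Type*} [TopologicalSpace X] [Bornology E]
    {K : Set X} (hK : IsCompact K) {f : X → E}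
    (hf : ∀ x ∈ K, ∃ B, IsBounded B ∧ ∀ᶠ y in 𝓝 x, f y ∈ B) :
    IsBounded (f '' K) := by
  refine hK.induction_on (p := fun s => IsBounded (f '' s)) (by simp)
    (fun s t hst ht => ht.subset (Set.image_mono hst))
    (fun s t hs ht => by rw [Set.image_union]; exact hs.union ht) fun x hx => ?_
  obtain ⟨B, hB, hfB⟩ := hf x hx
  exact ⟨_, mem_nhdsWithin_of_mem_nhds hfB, hB.subset (Set.image_subset_iff.2 fun _ hy => hy)⟩

lemma exists_isBounded_eventually_mem_of_continuousWithinAt_Ici {X E : Type*} [LinearOrder X]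
    [TopologicalSpace X] [OrderTopology X] [PseudoMetricSpace E] {f : X → E} {x : X} {L : E}
    (hr : ContinuousWithinAt f (Set.Ici x) x) (hl : Tendsto f (𝓝[<] x) (𝓝 L)) :
    ∃ B, IsBounded B ∧ ∀ᶠ y in 𝓝 x, f y ∈ B := by
  refine ⟨Metric.ball L 1 ∪ Metric.ball (f x) 1,
    Metric.isBounded_ball.union Metric.isBounded_ball, ?_⟩
  rw [← nhdsLT_sup_nhdsGE, Filter.eventually_sup]
  exact ⟨(hl.eventually (Metric.ball_mem_nhds _ one_pos)).mono fun _ h => Or.inl h,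
    (hr.eventually (Metric.ball_mem_nhds _ one_pos)).mono fun _ h => Or.inr h⟩

lemma continuous_projIic {α : Type*} [LinearOrder α] [TopologicalSpace α]
    [OrderClosedTopology α] (b : α) : Continuous (Set.projIic b) :=
  (continuous_const.min continuous_id).subtype_mk _

namespace PathHJB

variable {d : ℕ}

lemma shift_apply (x : Pth d) (h : ℝ) (θ : PathDom) : shift x h θ = Set.IicExtend x (θ + h) := by
  unfold shift
  split_ifs with hθ
  · exact (Set.IicExtend_of_le x (by linarith)).symm
  · exact (Set.IicExtend_of_mem x _).symm

def extend (p : ℝ × Pth d) (τ : ℝ) : Eucl d := Set.IicExtend p.2 (τ - p.1)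

lemma extend_of_le {p : ℝ × Pth d} {τ : ℝ} (h : p.1 ≤ τ) : extend p τ = p.2 zeroPt :=
  Set.IicExtend_of_le p.2 (sub_nonneg.2 h)

lemma extend_add (p : ℝ × Pth d) (θ : PathDom) : extend p (θ + p.1) = p.2 θ := by
  simp [extend]

lemma extend_min {p : ℝ × Pth d} {T : ℝ} (h : p.1 ≤ T) (τ : ℝ) :
    extend p (min T τ) = extend p τ := by
  rcases le_total T τ with hτ | hτ
  · rw [min_eq_left hτ, extend_of_le h, extend_of_le (h.trans hτ)]
  · rw [min_eq_right hτ]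

lemma shift_sub_apply (p : ℝ × Pth d) (T : ℝ) (θ : PathDom) :
    shift p.2 (T - p.1) θ = extend p (θ + T) := by
  rw [shift_apply, extend, add_sub_assoc]

lemma projIic_sub_add (s τ : ℝ) : (Set.projIic 0 (τ - s) : ℝ) + s = min s τ := by
  rw [Set.coe_projIic, ← min_add_add_right, zero_add, sub_add_cancel]

lemma normC_shift_sub {p q : ℝ × Pth d} (h : p.1 ≤ q.1) :
    normC (shift p.2 (q.1 - p.1) - q.2) = supDist (extend p) (extend q) := by
  set g : PathDom → ℝ := fun θ => dist (extend p (θ + q.1)) (extend q (θ + q.1))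
  calc normC (shift p.2 (q.1 - p.1) - q.2) = ⨆ θ, g θ := by
        simp only [normC, g, Pi.sub_apply, shift_sub_apply, extend_add, dist_eq_norm]
    _ = ⨆ τ, g (Set.projIic 0 (τ - q.1)) :=
        ((Set.projIic_surjective.comp fun r => ⟨r + q.1, add_sub_cancel_right r q.1⟩).iSup_comp
          g).symm
    _ = supDist (extend p) (extend q) := by
        refine congrArg iSup (funext fun τ => ?_)
        simp only [g, projIic_sub_add, extend_min h, extend_min (le_refl q.1)]

lemma dInfty_eq (p q : ℝ × Pth d) : dInfty p q = dist p.1 q.1 + supDist (extend p) (extend q) := by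
  unfold dInfty
  split_ifs with h
  · rw [normC_shift_sub h, Real.dist_eq, abs_sub_comm]
  · rw [normC_shift_sub (le_of_not_ge h), supDist_comm, Real.dist_eq]

lemma isBounded_range_of_mem_D0 {x : Pth d} (hx : x ∈ D0 d) :
    IsBounded (Set.range x) := by
  obtain ⟨a, ha⟩ := Filter.eventually_atBot.1 (hx.2.eventually (Metric.ball_mem_nhds 0 one_pos))
  have hK : IsCompact (Subtype.val ⁻¹' Set.Icc (a : ℝ) 0 : Set PathDom) :=
    (Topology.IsClosedEmbedding.subtypeVal isClosed_Iic).isCompact_preimage isCompact_Icc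
  have hbdd := hK.isBounded_image_of_locally fun θ _ =>
    let ⟨_, hL⟩ := hx.1.2 θ
    exists_isBounded_eventually_mem_of_continuousWithinAt_Ici (hx.1.1 θ) hL
  refine ((Metric.isBounded_ball (x := (0 : Eucl d)) (r := 1)).union hbdd).subset
    (Set.range_subset_iff.2 fun θ => ?_)
  rcases le_total θ a with h | h
  · exact Or.inl (ha θ h)
  · exact Or.inr ⟨θ, ⟨h, θ.2⟩, rfl⟩

lemma range_extend (p : ℝ × Pth d) : Set.range (extend p) = Set.range p.2 := by
  rw [show extend p = Set.IicExtend p.2 ∘ (· - p.1) from rfl,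
    Function.Surjective.range_comp (fun r => ⟨r + p.1, add_sub_cancel_right r p.1⟩),
    Set.range_IicExtend]

lemma isBounded_range_extend {p : ℝ × Pth d} (hp : p.2 ∈ D0 d) :
    IsBounded (Set.range (extend p)) :=
  range_extend p ▸ isBounded_range_of_mem_D0 hp

lemma dInfty_nonneg (p q : ℝ × Pth d) : 0 ≤ dInfty p q := by
  rw [dInfty_eq]
  exact add_nonneg dist_nonneg (supDist_nonneg _ _)

lemma dInfty_comm (p q : ℝ × Pth d) : dInfty p q = dInfty q p := by
  rw [dInfty_eq, dInfty_eq, dist_comm, supDist_comm]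

lemma dInfty_triangle {p q r : ℝ × Pth d} (hp : p.2 ∈ D0 d) (hq : q.2 ∈ D0 d) (hr : r.2 ∈ D0 d) :
    dInfty p r ≤ dInfty p q + dInfty q r := by
  simp only [dInfty_eq]
  linarith [dist_triangle p.1 q.1 r.1, supDist_triangle (isBounded_range_extend hp)
    (isBounded_range_extend hq) (isBounded_range_extend hr)]

lemma eq_of_extend_eq {p q : ℝ × Pth d} (ht : p.1 = q.1) (h : extend p = extend q) : p = q := by
  refine Prod.ext ht (funext fun θ => ?_)
  rw [← extend_add p θ, ← extend_add q θ, h, ht]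

lemma dInfty_eq_zero_iff {p q : ℝ × Pth d} (hp : p.2 ∈ D0 d) (hq : q.2 ∈ D0 d) :
    dInfty p q = 0 ↔ p = q := by
  refine ⟨fun h => ?_, fun h => by rw [h, dInfty_eq, dist_self, supDist_self, add_zero]⟩
  rw [dInfty_eq, add_eq_zero_iff_of_nonneg dist_nonneg (supDist_nonneg _ _)] at h
  exact eq_of_extend_eq (dist_eq_zero.1 h.1)
    (eq_of_supDist_eq_zero (isBounded_range_extend hp) (isBounded_range_extend hq) h.2)

lemma continuous_extend {p : ℝ × Pth d} (hp : Continuous p.2) : Continuous (extend p) :=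
  hp.comp ((continuous_projIic 0).comp (continuous_sub_right p.1))

lemma continuousWithinAt_extend {p : ℝ × Pth d} (hp : IsCadlag p.2) (τ : ℝ) :
    ContinuousWithinAt (extend p) (Set.Ici τ) τ :=
  (hp.1 _).comp ((continuous_projIic 0).comp (continuous_sub_right p.1)).continuousWithinAt
    fun _ hσ => Set.monotone_projIic (sub_le_sub_right hσ p.1)

lemma exists_tendsto_extend_nhdsLT {p : ℝ × Pth d} (hp : IsCadlag p.2) (τ : ℝ) :
    ∃ L, Tendsto (extend p) (𝓝[<] τ) (𝓝 L) := by
  rcases le_or_gt τ p.1 with hτ | hτ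
  · obtain ⟨L, hL⟩ := hp.2 (Set.projIic 0 (τ - p.1))
    refine ⟨L, hL.comp (((continuous_projIic 0).comp
      (continuous_sub_right p.1)).continuousWithinAt.tendsto_nhdsWithin fun σ hσ => ?_)⟩
    show min 0 (σ - p.1) < min 0 (τ - p.1)
    have hσ : σ < τ := hσ
    rw [min_eq_right (by linarith), min_eq_right (by linarith)]
    linarith
  · refine ⟨p.2 zeroPt, tendsto_const_nhds.congr' ?_⟩
    filter_upwards [Ioo_mem_nhdsLT hτ] with σ hσ using (extend_of_le hσ.1.le).symm

lemma tendsto_extend_atBot {p : ℝ × Pth d} (hp : Tendsto p.2 atBot (𝓝 0)) :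
    Tendsto (extend p) atBot (𝓝 0) :=
  hp.comp (Monotone.tendsto_atBot_atBot (fun _ _ h => Set.monotone_projIic (sub_le_sub_right h _))
    fun θ => ⟨θ + p.1, by simp⟩)

def restrictPath (X : ℝ → Eucl d) (s : ℝ) : Pth d := fun θ => X (θ + s)

lemma extend_restrictPath {X : ℝ → Eucl d} {s : ℝ} (hX : ∀ τ, s ≤ τ → X τ = X s) :
    extend (s, restrictPath X s) = X := by
  funext τ
  show X ((Set.projIic 0 (τ - s) : ℝ) + s) = X τ
  rw [projIic_sub_add]
  rcases le_total s τ with h | h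
  · rw [min_eq_left h, hX τ h]
  · rw [min_eq_right h]

lemma tendsto_val_add_atBot (s : ℝ) : Tendsto (fun θ : PathDom => (θ : ℝ) + s) atBot atBot :=
  Monotone.tendsto_atBot_atBot (fun _ _ h => (add_le_add_iff_right s).2 h) fun b =>
    ⟨Set.projIic 0 (b - s), by rw [projIic_sub_add]; exact min_le_right s b⟩

lemma restrictPath_mem_D0 {X : ℝ → Eucl d} {s : ℝ}
    (hr : ∀ τ, ContinuousWithinAt X (Set.Ici τ) τ) (hl : ∀ τ, ∃ L, Tendsto X (𝓝[<] τ) (𝓝 L))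
    (h0 : Tendsto X atBot (𝓝 0)) : restrictPath X s ∈ D0 d := by
  have hc : Continuous fun θ : PathDom => (θ : ℝ) + s :=
    continuous_subtype_val.add continuous_const
  refine ⟨⟨fun θ => (hr _).comp hc.continuousWithinAt fun η hη => (add_le_add_iff_right s).2 hη,
    fun θ => ?_⟩, h0.comp (tendsto_val_add_atBot s)⟩
  obtain ⟨L, hL⟩ := hl (θ + s)
  exact ⟨L, hL.comp (hc.continuousWithinAt.tendsto_nhdsWithin fun η hη =>
    (add_lt_add_iff_right s).2 hη)⟩

lemma restrictPath_mem_C0 {X : ℝ → Eucl d} {s : ℝ} (hc : Continuous X)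
    (h0 : Tendsto X atBot (𝓝 0)) : restrictPath X s ∈ C0 d :=
  ⟨hc.comp (continuous_subtype_val.add continuous_const), h0.comp (tendsto_val_add_atBot s)⟩

lemma C0_subset_D0 : C0 d ⊆ D0 d := fun _ hx =>
  ⟨⟨fun _ => hx.1.continuousWithinAt, fun _ => ⟨_, hx.1.continuousWithinAt⟩⟩, hx.2⟩

section Completeness

variable {u : ℕ → ℝ × Pth d}

lemma exists_tendsto_of_cauchy_dInfty (hu : ∀ k, (u k).2 ∈ D0 d)
    (hcau : ∀ ε > (0 : ℝ), ∃ N : ℕ, ∀ k ≥ N, ∀ l ≥ N, dInfty (u k) (u l) < ε) :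
    ∃ (s : ℝ) (X : ℝ → Eucl d), Tendsto (fun k => (u k).1) atTop (𝓝 s) ∧
      TendstoUniformly (fun k => extend (u k)) X atTop := by
  have htime : ∀ k l, dist (u k).1 (u l).1 ≤ dInfty (u k) (u l) := fun k l => by
    rw [dInfty_eq]
    linarith [supDist_nonneg (extend (u k)) (extend (u l))]
  have hpath : ∀ k l τ, dist (extend (u k) τ) (extend (u l) τ) ≤ dInfty (u k) (u l) :=
    fun k l τ => by
      rw [dInfty_eq]
      linarith [dist_nonneg (x := (u k).1) (y := (u l).1),
        dist_le_supDist (isBounded_range_extend (hu k)) (isBounded_range_extend (hu l)) τ]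
  have hs : CauchySeq fun k => (u k).1 := Metric.cauchySeq_iff.2 fun ε hε =>
    (hcau ε hε).imp fun _ hN m hm n hn => (htime m n).trans_lt (hN m hm n hn)
  have hX : UniformCauchySeqOn (fun k => extend (u k)) atTop Set.univ :=
    Metric.uniformCauchySeqOn_iff.2 fun ε hε =>
      (hcau ε hε).imp fun _ hN m hm n hn τ _ => (hpath m n τ).trans_lt (hN m hm n hn)
  obtain ⟨s, hs⟩ := cauchySeq_tendsto_of_complete hs
  choose X hX' using fun τ => cauchySeq_tendsto_of_complete (hX.cauchySeq (Set.mem_univ τ))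
  exact ⟨s, X, hs, tendstoUniformlyOn_univ.1 (hX.tendstoUniformlyOn_of_tendsto fun τ _ => hX' τ)⟩

lemma eq_of_tendsto_extend {s : ℝ} {X : ℝ → Eucl d}
    (hs : Tendsto (fun k => (u k).1) atTop (𝓝 s))
    (hX : ∀ τ, Tendsto (fun k => extend (u k) τ) atTop (𝓝 (X τ)))
    (hr : ContinuousWithinAt X (Set.Ici s) s) {τ : ℝ} (hτ : s ≤ τ) : X τ = X s := by
  have hIoi : ∀ σ, s < σ → X σ = X (s + 1) := fun σ hσ =>
    tendsto_nhds_unique_of_eventuallyEq (hX σ) (hX (s + 1)) <| by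
      filter_upwards [hs.eventually (gt_mem_nhds (lt_min hσ (lt_add_one s)))] with k hk
      rw [extend_of_le (hk.le.trans (min_le_left _ _)),
        extend_of_le (hk.le.trans (min_le_right _ _))]
  have hs1 : X s = X (s + 1) :=
    tendsto_nhds_unique (hr.mono Set.Ioi_subset_Ici_self) <| tendsto_const_nhds.congr' <|
      eventually_nhdsWithin_of_forall fun σ hσ => (hIoi σ hσ).symm
  rcases hτ.eq_or_lt with rfl | hτ
  · rfl
  · rw [hIoi τ hτ, hs1]

lemma tendsto_dInfty_restrictPath {s : ℝ} {X : ℝ → Eucl d}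
    (hs : Tendsto (fun k => (u k).1) atTop (𝓝 s))
    (hX : TendstoUniformly (fun k => extend (u k)) X atTop) (hXs : ∀ τ, s ≤ τ → X τ = X s) :
    Tendsto (fun k => dInfty (u k) (s, restrictPath X s)) atTop (𝓝 0) := by
  simp only [dInfty_eq, extend_restrictPath hXs]
  simpa using (tendsto_iff_dist_tendsto_zero.1 hs).add hX.tendsto_supDist

lemma tendsto_atBot_of_tendstoUniformly_extend {X : ℝ → Eucl d}
    (hu : ∀ k, Tendsto (u k).2 atBot (𝓝 0))
    (hX : TendstoUniformly (fun k => extend (u k)) X atTop) : Tendsto X atBot (𝓝 0) :=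
  hX.tendsto_of_eventually_tendsto (Eventually.of_forall fun k => tendsto_extend_atBot (hu k))
    tendsto_const_nhds

theorem LamHat_complete {t : ℝ} (hu : ∀ k, u k ∈ LamHat d t)
    (hcau : ∀ ε > (0 : ℝ), ∃ N : ℕ, ∀ k ≥ N, ∀ l ≥ N, dInfty (u k) (u l) < ε) :
    ∃ p ∈ LamHat d t, Tendsto (fun k => dInfty (u k) p) atTop (𝓝 0) := by
  obtain ⟨s, X, hs, hX⟩ := exists_tendsto_of_cauchy_dInfty (fun k => (hu k).2) hcau
  have hr : ∀ τ, ContinuousWithinAt X (Set.Ici τ) τ := fun τ =>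
    hX.continuousWithinAt_of_forall Set.self_mem_Ici fun k =>
      continuousWithinAt_extend (hu k).2.1 τ
  have hXs : ∀ τ, s ≤ τ → X τ = X s := fun _ => eq_of_tendsto_extend hs hX.tendsto_at (hr s)
  refine ⟨(s, restrictPath X s), ⟨ge_of_tendsto' hs fun k => (hu k).1, restrictPath_mem_D0 hr
    (fun τ => hX.exists_tendsto_of_forall fun k => exists_tendsto_extend_nhdsLT (hu k).2.1 τ)
    (tendsto_atBot_of_tendstoUniformly_extend (fun k => (hu k).2.2) hX)⟩,
    tendsto_dInfty_restrictPath hs hX hXs⟩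

theorem Lam_complete {t : ℝ} (hu : ∀ k, u k ∈ Lam d t)
    (hcau : ∀ ε > (0 : ℝ), ∃ N : ℕ, ∀ k ≥ N, ∀ l ≥ N, dInfty (u k) (u l) < ε) :
    ∃ p ∈ Lam d t, Tendsto (fun k => dInfty (u k) p) atTop (𝓝 0) := by
  obtain ⟨s, X, hs, hX⟩ := exists_tendsto_of_cauchy_dInfty (fun k => C0_subset_D0 (hu k).2) hcau
  have hc : Continuous X :=
    hX.continuous (Frequently.of_forall fun k => continuous_extend (hu k).2.1)
  have hXs : ∀ τ, s ≤ τ → X τ = X s := fun _ =>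
    eq_of_tendsto_extend hs hX.tendsto_at hc.continuousWithinAt
  refine ⟨(s, restrictPath X s), ⟨ge_of_tendsto' hs fun k => (hu k).1, restrictPath_mem_C0 hc
    (tendsto_atBot_of_tendstoUniformly_extend (fun k => (hu k).2.2) hX)⟩,
    tendsto_dInfty_restrictPath hs hX hXs⟩

end Completeness

theorem dInfty_metric_and_complete_general {d : ℕ} (t : ℝ) :
    (∀ p ∈ LamHat d t, ∀ q ∈ LamHat d t, 0 ≤ dInfty p q) ∧
    (∀ p ∈ LamHat d t, ∀ q ∈ LamHat d t, dInfty p q = dInfty q p) ∧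
    (∀ p ∈ LamHat d t, ∀ q ∈ LamHat d t, (dInfty p q = 0 ↔ p = q)) ∧
    (∀ p ∈ LamHat d t, ∀ q ∈ LamHat d t, ∀ r ∈ LamHat d t,
      dInfty p r ≤ dInfty p q + dInfty q r) ∧
    (∀ u : ℕ → ℝ × Pth d, (∀ k, u k ∈ LamHat d t) →
      (∀ ε > (0:ℝ), ∃ N : ℕ, ∀ k ≥ N, ∀ l ≥ N, dInfty (u k) (u l) < ε) →
      ∃ p ∈ LamHat d t, Filter.Tendsto (fun k => dInfty (u k) p) Filter.atTop (nhds 0)) ∧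
    (∀ u : ℕ → ℝ × Pth d, (∀ k, u k ∈ Lam d t) →
      (∀ ε > (0:ℝ), ∃ N : ℕ, ∀ k ≥ N, ∀ l ≥ N, dInfty (u k) (u l) < ε) →
      ∃ p ∈ Lam d t, Filter.Tendsto (fun k => dInfty (u k) p) Filter.atTop (nhds 0)) :=
  ⟨fun p _ q _ => dInfty_nonneg p q, fun p _ q _ => dInfty_comm p q,
    fun _ hp _ hq => dInfty_eq_zero_iff hp.2 hq.2,
    fun _ hp _ hq _ hr => dInfty_triangle hp.2 hq.2 hr.2,
    fun _ => LamHat_complete, fun _ => Lam_complete⟩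

/-- `d_∞` is a metric on `Λ̂^t` and on `Λ^t`, and both are
complete metric spaces. -/
theorem dInfty_metric_and_complete {d : ℕ} (t : ℝ) (ht : 0 ≤ t) :
    (∀ p ∈ LamHat d t, ∀ q ∈ LamHat d t, 0 ≤ dInfty p q) ∧
    (∀ p ∈ LamHat d t, ∀ q ∈ LamHat d t, dInfty p q = dInfty q p) ∧
    (∀ p ∈ LamHat d t, ∀ q ∈ LamHat d t, (dInfty p q = 0 ↔ p = q)) ∧
    (∀ p ∈ LamHat d t, ∀ q ∈ LamHat d t, ∀ r ∈ LamHat d t,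
      dInfty p r ≤ dInfty p q + dInfty q r) ∧
    (∀ u : ℕ → ℝ × Pth d, (∀ k, u k ∈ LamHat d t) →
      (∀ ε > (0:ℝ), ∃ N : ℕ, ∀ k ≥ N, ∀ l ≥ N, dInfty (u k) (u l) < ε) →
      ∃ p ∈ LamHat d t, Filter.Tendsto (fun k => dInfty (u k) p) Filter.atTop (nhds 0)) ∧
    (∀ u : ℕ → ℝ × Pth d, (∀ k, u k ∈ Lam d t) →
      (∀ ε > (0:ℝ), ∃ N : ℕ, ∀ k ≥ N, ∀ l ≥ N, dInfty (u k) (u l) < ε) →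
      ∃ p ∈ Lam d t, Filter.Tendsto (fun k => dInfty (u k) p) Filter.atTop (nhds 0)) :=
  dInfty_metric_and_complete_general t
end PathHJB
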